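/- Fix an integer N ≥ 1, γ ∈ ℝ and μ ∈ ℂ. Then for every f ∈ CB^∞(ℝ^N) and every ε ∈ {+, −}, S_{N+1}(b^ε_μ f) = S_{N+1}(b^-_μ(S_N f)) as functions on ℝ^{N+1}; in particular S_{N+1}(b^+_μ f) = S_{N+1}(b^-_μ f), and the symmetrized creation operator B_μ := S_{N+1} ∘ b^-_μ restricted to S_N-invariant functions satisfies S_{N+1} ∘ b^ε_μ = B_μ ∘ S_N. -/

import Mathlib

open scoped BigOperators
open MeasureTheory Complex

noncomputable section

abbrev Pt (N : ℕ) := Fin N → ℝ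
abbrev Fn (N : ℕ) := Pt N → ℂ

/-- The permutation `w` acting on points: `(w • x) j = x (w⁻¹ j)`. -/
def permPt {N : ℕ} (w : Equiv.Perm (Fin N)) (x : Pt N) : Pt N := fun j => x (w⁻¹ j)

/-- The fundamental (positive) alcove `ℝ^N_+ = {x : x_1 > … > x_N}`. -/
def posAlcove (N : ℕ) : Set (Pt N) := {x | ∀ i j : Fin N, i < j → x j < x i}

/-- The alcove `w⁻¹ ℝ^N_+`. -/
def alcove {N : ℕ} (w : Equiv.Perm (Fin N)) : Set (Pt N) := {x | permPt w x ∈ posAlcove N}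

/-- Regular vectors: pairwise distinct coordinates. -/
def regPts (N : ℕ) : Set (Pt N) := {x | ∀ i j : Fin N, i ≠ j → x i ≠ x j}

/-- Partial derivative in the `j`-th coordinate. -/
def pd {N : ℕ} (j : Fin N) (f : Fn N) : Fn N :=
  fun x => deriv (fun t : ℝ => f (Function.update x j t)) (x j)

/-- The plane wave `e^{iλ}`. -/
def planeWave {N : ℕ} (lam : Fin N → ℂ) : Fn N :=
  fun x => Complex.exp (Complex.I * ∑ j, lam j * (x j : ℂ))

/-- The integral operator `I_{jk}`:
`(I_{jk} f)(x) = ∫_0^{x_j-x_k} f(x - y(e_j - e_k)) dy`. -/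
def Iop {N : ℕ} (j k : Fin N) (f : Fn N) : Fn N :=
  fun x => ∫ y in (0:ℝ)..(x j - x k),
    f (Function.update (Function.update x j (x j - y)) k (x k + y))

/-- The integral-reflection operator `s^γ` associated to the transposition `(j k)`. -/
def sIR {N : ℕ} (γ : ℝ) (j k : Fin N) (f : Fn N) : Fn N :=
  fun x => f (permPt (Equiv.swap j k) x) + (γ : ℂ) * Iop j k f x

/-- The integral-reflection operator for the simple transposition `s_j = (j, j+1)`
(zero-based); identity for out-of-range `j`. -/
def sSimple {N : ℕ} (γ : ℝ) (j : ℕ) (f : Fn N) : Fn N :=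
  if h : j + 1 < N then sIR γ ⟨j, Nat.lt_of_succ_lt h⟩ ⟨j + 1, h⟩ f else f

/-- `w^γ` computed from a word `L` of simple reflections:
`wordOp γ [i₁,…,i_l] f = s_{i₁}^γ (⋯ (s_{i_l}^γ f))`. -/
def wordOp {N : ℕ} (γ : ℝ) (L : List ℕ) (f : Fn N) : Fn N :=
  L.foldr (fun j g => sSimple γ j g) f

/-- The simple transposition `s_j` (zero-based); identity for out-of-range `j`. -/
def simpleT (N : ℕ) (j : ℕ) : Equiv.Perm (Fin N) :=
  if h : j + 1 < N then Equiv.swap ⟨j, Nat.lt_of_succ_lt h⟩ ⟨j + 1, h⟩ else 1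

/-- The permutation represented by a word of simple reflections. -/
def wordPerm (N : ℕ) (L : List ℕ) : Equiv.Perm (Fin N) := (L.map (simpleT N)).prod

/-- `P` is the propagation operator `P^γ_N`: for continuous `f`, `P f` is continuous and
on the alcove `w⁻¹ ℝ^N_+` it equals `(w^γ f)(w x)`, where `w^γ` may be computed from any
word of simple reflections representing `w` (the operators `s_j^γ` satisfy the relations
of the symmetric group, so this does not depend on the word). -/
def IsPropagation {N : ℕ} (γ : ℝ) (P : Fn N → Fn N) : Prop :=
  ∀ f : Fn N, Continuous f →
    Continuous (P f) ∧
    ∀ (w : Equiv.Perm (Fin N)) (L : List ℕ),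
      (∀ j ∈ L, j + 1 < N) → wordPerm N L = w →
      ∀ x ∈ alcove w, P f x = wordOp γ L f (permPt w x)

open scoped Classical in
/-- The operator `Λ_j` entering the Dunkl-type operator `∂_j^γ = ∂_j - γ Λ_j`. -/
def LambdaOp {N : ℕ} (j : Fin N) (f : Fn N) : Fn N := fun x =>
  (∑ k : Fin N, if k < j ∧ x k < x j then f (permPt (Equiv.swap j k) x) else 0)
    - ∑ k : Fin N, if j < k ∧ x j < x k then f (permPt (Equiv.swap j k) x) else 0

/-- Membership in `CB^∞(ℝ^N)`: continuous, and smooth on every alcove. -/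
def CBsmooth {N : ℕ} (f : Fn N) : Prop :=
  Continuous f ∧ ∀ w : Equiv.Perm (Fin N), ContDiffOn ℝ (⊤ : ℕ∞) f (alcove w)

/-- Membership in `sol^γ_λ`: lies in `CB^∞(ℝ^N)` and satisfies `∂_j^γ f = iλ_j f`
on the regular vectors for every `j`. -/
def memSol {N : ℕ} (γ : ℝ) (lam : Fin N → ℂ) (f : Fn N) : Prop :=
  CBsmooth f ∧ ∀ j : Fin N, ∀ x ∈ regPts N,
    pd j f x - (γ : ℂ) * LambdaOp j f x = Complex.I * lam j * f x

open scoped Classical in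
/-- Coxeter length = number of inversions. -/
def invCount {N : ℕ} (w : Equiv.Perm (Fin N)) : ℕ :=
  (Finset.univ.filter fun p : Fin N × Fin N => p.1 < p.2 ∧ w p.2 < w p.1).card

/-- `x + δ(e_j - e_k)`. -/
def jumpShift {N : ℕ} (j k : Fin N) (δ : ℝ) (x : Pt N) : Pt N :=
  Function.update (Function.update x j (x j + δ)) k (x k - δ)

/-- The derivative jump conditions with coupling `γ`: at every subregular point of
every wall `{x_j = x_k}` (`j < k`), the jump of `(∂_j - ∂_k) f` equals `2γ f(x)`. -/
def SatisfiesJump {N : ℕ} (γ : ℝ) (f : Fn N) : Prop :=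
  ∀ j k : Fin N, j < k → ∀ x : Pt N, x j = x k →
    (∀ l m : Fin N, l < m → ¬(l = j ∧ m = k) → x l ≠ x m) →
    Filter.Tendsto
      (fun δ : ℝ =>
        (pd j f (jumpShift j k δ x) - pd k f (jumpShift j k δ x))
          - (pd j f (jumpShift j k (-δ) x) - pd k f (jumpShift j k (-δ) x)))
      (nhdsWithin 0 (Set.Ioi 0)) (nhds (2 * (γ : ℂ) * f x))

open scoped Classical in
/-- Indicator of a strictly decreasing chain of real numbers. -/
def chainInd (l : List ℝ) : ℂ := if List.Chain' (fun a b => b < a) l then 1 else 0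

/-- Iterated integral entering `ê⁻_{μ;i}`: for the list `[i₁,…,i_n]`, the upper limit of
the `y_m`-integral is `x_{i_{m-1}}` (threaded through `ub`, starting at `x_{N+1}`), the lower
limit is `x_{i_m}`, and the coordinate `i_m` of the argument is replaced by `y_m`. -/
def eMinusAux {N : ℕ} (μ : ℂ) (f : Fn N) (x : Pt (N + 1)) :
    List (Fin N) → ℝ → Pt N → ℂ
  | [], _, z => f z
  | i :: rest, ub, z =>
      ∫ y in (x i.castSucc)..ub,
        Complex.exp (Complex.I * μ * ((x i.castSucc - y : ℝ) : ℂ)) *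
          eMinusAux μ f x rest (x i.castSucc) (Function.update z i y)

/-- The elementary creation operator `ê⁻_{μ;i}`. -/
def ehatMinus {N : ℕ} (μ : ℂ) (l : List (Fin N)) (f : Fn N) : Fn (N + 1) :=
  fun x =>
    chainInd (x (Fin.last N) :: l.map fun i => x i.castSucc) *
      Complex.exp (Complex.I * μ * ((x (Fin.last N) : ℝ) : ℂ)) *
      eMinusAux μ f x l (x (Fin.last N)) (fun j => x j.castSucc)

/-- Iterated integral entering `ê⁺_{μ;i}`: the lower limit of the `y_m`-integral is
`x_{i_{m+1}+1}` (the coordinate of the next entry, or `x_1` at the end), the upper limit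
is `x_{i_m+1}`, and the coordinate `i_m` of the argument is replaced by `y_m`. -/
def ePlusAux {N : ℕ} (μ : ℂ) (f : Fn N) (x : Pt (N + 1)) :
    List (Fin N) → Pt N → ℂ
  | [], z => f z
  | i :: rest, z =>
      ∫ y in (match rest with
              | [] => x 0
              | j :: _ => x j.succ)..(x i.succ),
        Complex.exp (Complex.I * μ * ((x i.succ - y : ℝ) : ℂ)) *
          ePlusAux μ f x rest (Function.update z i y)

/-- The elementary creation operator `ê⁺_{μ;i}`. -/
def ehatPlus {N : ℕ} (μ : ℂ) (l : List (Fin N)) (f : Fn N) : Fn (N + 1) :=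
  fun x =>
    chainInd ((l.map fun i => x i.succ) ++ [x 0]) *
      Complex.exp (Complex.I * μ * ((x 0 : ℝ) : ℂ)) *
      ePlusAux μ f x l (fun j => x j.succ)

/-- The non-symmetric creation operator
`b⁻_μ = ∑_{n=0}^N γⁿ ∑_{i ∈ 𝔦ⁿ_{[1,N]}} ê⁻_{μ;i}` (tuples of pairwise distinct indices
are encoded as injections `Fin n ↪ Fin N`). -/
def bMinus {N : ℕ} (γ : ℝ) (μ : ℂ) (f : Fn N) : Fn (N + 1) :=
  fun x => ∑ n ∈ Finset.range (N + 1), (γ : ℂ) ^ n *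
    ∑ e : Fin n ↪ Fin N, ehatMinus μ (List.ofFn ⇑e) f x

/-- The non-symmetric creation operator `b⁺_μ`. -/
def bPlus {N : ℕ} (γ : ℝ) (μ : ℂ) (f : Fn N) : Fn (N + 1) :=
  fun x => ∑ n ∈ Finset.range (N + 1), (γ : ℂ) ^ n *
    ∑ e : Fin n ↪ Fin N, ehatPlus μ (List.ofFn ⇑e) f x

/-- `φ̌⁺`: evaluate the first coordinate at `x⁺`. -/
def phiCheckPlus {k : ℕ} (xp : ℝ) (f : Fn (k + 1)) : Fn k := fun x => f (Fin.cons xp x)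

/-- `φ̌⁻`: evaluate the last coordinate at `x⁻`. -/
def phiCheckMinus {k : ℕ} (xm : ℝ) (f : Fn (k + 1)) : Fn k := fun x => f (Fin.snoc x xm)

/-- `b^ε_μ`, `ε = +` encoded as `true` and `ε = -` as `false`. -/
def bEps (ε : Bool) {k : ℕ} (γ : ℝ) (μ : ℂ) (f : Fn k) : Fn (k + 1) :=
  if ε then bPlus γ μ f else bMinus γ μ f

/-- `ê^ε_{μ;i}`. -/
def ehatEps (ε : Bool) {N : ℕ} (μ : ℂ) (l : List (Fin N)) (f : Fn N) : Fn (N + 1) :=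
  if ε then ehatPlus μ l f else ehatMinus μ l f

/-- `φ̌^ε`. -/
def phiEps (ε : Bool) {k : ℕ} (xp xm : ℝ) (f : Fn (k + 1)) : Fn k :=
  if ε then phiCheckPlus xp f else phiCheckMinus xm f

/-- `a^ε_μ = φ̌^ε ∘ b^ε_μ`. -/
def aEps (ε : Bool) {k : ℕ} (γ : ℝ) (xp xm : ℝ) (μ : ℂ) (f : Fn k) : Fn k :=
  phiEps ε xp xm (bEps ε γ μ f)

/-- The sign `ε = ±1` of `ε ∈ {+,-}`. -/
def sgn (ε : Bool) : ℂ := if ε then 1 else -1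

/-- `s⁺` (swap of the first two coordinates of `ℝ^{N+2}`) resp. `s⁻` (swap of the last two). -/
def sEps (ε : Bool) (N : ℕ) : Equiv.Perm (Fin (N + 2)) :=
  if ε then Equiv.swap 0 1 else Equiv.swap ⟨N, by omega⟩ ⟨N + 1, by omega⟩

/-- Iterated integral entering `č⁺_{μ;i}` (the variables `y_1,…,y_n`). -/
def cAuxPlus {N : ℕ} (μ : ℂ) (xp : ℝ) (x : Pt N) (g : Pt N → ℂ) :
    List (Fin N) → Pt N → ℂ
  | [], z => g z
  | i :: rest, z =>
      ∫ y in (match rest with | [] => xp | j :: _ => x j)..(x i),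
        Complex.exp (Complex.I * μ * ((x i - y : ℝ) : ℂ)) *
          cAuxPlus μ xp x g rest (Function.update z i y)

/-- The elementary operator `č⁺_{μ;i}` (with `x_{i_0} := x⁻` and `x_{i_{n+1}} := x⁺`;
the variable `y_0` is plugged in as the final argument of `f`). -/
def cCheckPlus {N : ℕ} (μ : ℂ) (xp xm : ℝ) (l : List (Fin N)) (f : Fn (N + 1)) : Fn N :=
  fun x =>
    chainInd (l.map x) * Complex.exp (Complex.I * μ * ((xp : ℝ) : ℂ)) *
      ∫ y0 in (match l with | [] => xp | i :: _ => x i)..xm,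
        Complex.exp (Complex.I * μ * ((xm - y0 : ℝ) : ℂ)) *
          cAuxPlus μ xp x (fun z => f (Fin.snoc z y0)) l x

/-- Iterated integral entering `č⁻_{μ;i}` (the variables `y_1,…,y_{n+1}`;
the variable `y_{n+1}` is plugged in as the first argument of `f`). -/
def cAuxMinus {N : ℕ} (μ : ℂ) (xp : ℝ) (x : Pt N) (f : Fn (N + 1)) :
    List (Fin N) → ℝ → Pt N → ℂ
  | [], ub, z =>
      ∫ y in xp..ub, Complex.exp (Complex.I * μ * ((xp - y : ℝ) : ℂ)) * f (Fin.cons y z)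
  | i :: rest, ub, z =>
      ∫ y in (x i)..ub,
        Complex.exp (Complex.I * μ * ((x i - y : ℝ) : ℂ)) *
          cAuxMinus μ xp x f rest (x i) (Function.update z i y)

/-- The elementary operator `č⁻_{μ;i}` (with `x_{i_0} := x⁻` and `x_{i_{n+1}} := x⁺`). -/
def cCheckMinus {N : ℕ} (μ : ℂ) (xp xm : ℝ) (l : List (Fin N)) (f : Fn (N + 1)) : Fn N :=
  fun x => chainInd (l.map x) * Complex.exp (Complex.I * μ * ((xm : ℝ) : ℂ)) *
    cAuxMinus μ xp x f l xm x

/-- `č^ε_{μ;i}`. -/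
def cCheckEps (ε : Bool) {N : ℕ} (μ : ℂ) (xp xm : ℝ) (l : List (Fin N)) (f : Fn (N + 1)) :
    Fn N :=
  if ε then cCheckPlus μ xp xm l f else cCheckMinus μ xp xm l f

/-- The operator `c⁺_μ = ∑_{n=0}^N γ^{n+1} ∑_i č⁺_{μ;i}`. -/
def cPlusOp {N : ℕ} (γ : ℝ) (μ : ℂ) (xp xm : ℝ) (f : Fn (N + 1)) : Fn N :=
  fun x => ∑ n ∈ Finset.range (N + 1), (γ : ℂ) ^ (n + 1) *
    ∑ e : Fin n ↪ Fin N, cCheckPlus μ xp xm (List.ofFn ⇑e) f x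

/-- The operator `c⁻_μ = ∑_{n=0}^N γ^{n+1} ∑_i č⁻_{μ;i}`. -/
def cMinusOp {N : ℕ} (γ : ℝ) (μ : ℂ) (xp xm : ℝ) (f : Fn (N + 1)) : Fn N :=
  fun x => ∑ n ∈ Finset.range (N + 1), (γ : ℂ) ^ (n + 1) *
    ∑ e : Fin n ↪ Fin N, cCheckMinus μ xp xm (List.ofFn ⇑e) f x

/-- `c^ε_μ`. -/
def cEps (ε : Bool) {N : ℕ} (γ : ℝ) (μ : ℂ) (xp xm : ℝ) (f : Fn (N + 1)) : Fn N :=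
  if ε then cPlusOp γ μ xp xm f else cMinusOp γ μ xp xm f

/-- The closed box `J^M = [x⁺,x⁻]^M`. -/
def box (M : ℕ) (xp xm : ℝ) : Set (Pt M) := {x | ∀ j, x j ∈ Set.Icc xp xm}

/-- The `L²(J^M)` inner product `⟨u,v⟩_M = ∫_{J^M} u · conj v`. -/
def ipJ {M : ℕ} (xp xm : ℝ) (u v : Fn M) : ℂ :=
  ∫ x in box M xp xm, u x * (starRingEnd ℂ) (v x)

/-- Smooth functions compactly supported in the open box `(x⁺,x⁻)^M`. -/
def IsTestFn {M : ℕ} (xp xm : ℝ) (f : Fn M) : Prop :=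
  ContDiff ℝ (⊤ : ℕ∞) f ∧ HasCompactSupport f ∧ ∀ x, f x ≠ 0 → ∀ j, x j ∈ Set.Ioo xp xm

/-- The symmetrizer `𝒮_N = (1/N!) ∑_{w ∈ S_N} w`. -/
def symN (N : ℕ) (f : Fn N) : Fn N :=
  fun x => (N.factorial : ℂ)⁻¹ * ∑ w : Equiv.Perm (Fin N), f (permPt w⁻¹ x)

open scoped Classical in
/-- `G^γ_μ = ∏_{j<k} (μ_j - μ_k - iγ)/(μ_j - μ_k)`. -/
def Gcoef {N : ℕ} (γ : ℝ) (mu : Fin N → ℂ) : ℂ :=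
  ∏ p ∈ Finset.univ.filter (fun p : Fin N × Fin N => p.1 < p.2),
    (mu p.1 - mu p.2 - Complex.I * (γ : ℂ)) / (mu p.1 - mu p.2)

/-- The decreasing rearrangement `x↓`. -/
def decRearrange {N : ℕ} (x : Pt N) : Pt N := fun j => x (Tuple.sort x (Fin.rev j))

/-- The Bethe wavefunction
`Ψ_λ(x) = (1/N!) ∑_{w ∈ S_N} G^γ_{wλ} exp(i ∑_j (wλ)_j (x↓)_j)`. -/
def Bethe {N : ℕ} (γ : ℝ) (lam : Fin N → ℂ) : Fn N :=
  fun x => (N.factorial : ℂ)⁻¹ * ∑ w : Equiv.Perm (Fin N),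
    Gcoef γ (fun j => lam (w⁻¹ j)) *
      Complex.exp (Complex.I * ∑ j, lam (w⁻¹ j) * ((decRearrange x j : ℝ) : ℂ))

/-- The transpositions of consecutive entries of a list:
`adjSwaps [a₁,…,a_m] = [(a₁ a₂), (a₂ a₃), …, (a_{m-1} a_m)]`. -/
def adjSwaps {M : ℕ} : List (Fin M) → List (Equiv.Perm (Fin M))
  | [] => []
  | [_] => []
  | a :: b :: rest => Equiv.swap a b :: adjSwaps (b :: rest)

/-- `b⁻_{λ_N} (b⁻_{λ_{N-1}} (⋯ (b⁻_{λ_1} 1)))`. -/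
def iterBMinus (γ : ℝ) : (N : ℕ) → (Fin N → ℂ) → Fn N
  | 0, _ => fun _ => 1
  | N + 1, lam => bMinus γ (lam (Fin.last N)) (iterBMinus γ N (fun j => lam j.castSucc))

/-- `b⁺_{λ_1} (b⁺_{λ_2} (⋯ (b⁺_{λ_N} 1)))`. -/
def iterBPlus (γ : ℝ) : (N : ℕ) → (Fin N → ℂ) → Fn N
  | 0, _ => fun _ => 1
  | N + 1, lam => bPlus γ (lam 0) (iterBPlus γ N (fun j => lam j.succ))

/-!
Both `ê⁺_{μ;i} f` and `ê⁻_{μ;i} f` are one and the same function of the decreasing chain of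
their integration bounds (and of the coordinates not integrated over); pulling the phases
`e^{iμ(·)}` out of the integrals turns both into `e^{iμ Σ bounds}` times an iterated integral of
`e^{-iμ y}`. A cyclic relabelling `σ_i` of the coordinates carries the bounds of `ê⁺` to those of
`ê⁻`, so `ê⁺_{μ;i} f = ê⁻_{μ;i} f ∘ σ_i`, and the two agree after symmetrization.
For the other identity, `b⁻_μ` is linear on continuous functions and turns the relabelling
`f ↦ f ∘ w` (`w ∈ S_N`) into the relabelling by `w` extended to fix the last coordinate, which
`𝒮_{N+1}` absorbs.
-/

open Function

variable {N : ℕ}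

section ChainIntegral

variable (μ : ℂ)

/-- For bounds `B = [b₀, b₁, …, bₙ]` and indices `l = [i₁, …, iₙ]`, the iterated integral
`∏ₘ ∫_{b_m}^{b_{m-1}} dy_m e^{-iμ y_m}` of `f` with coordinate `i_m` replaced by `y_m`;
lists of mismatched lengths give junk. -/
def chainIntegral (f : Fn N) : List (Fin N) → List ℝ → Pt N → ℂ
  | [], _, z => f z
  | i :: rest, b :: bs, z =>
      ∫ y in bs.headD 0..b, exp (-(I * μ * y)) * chainIntegral f rest bs (update z i y)
  | _ :: _, [], _ => 0

variable {μ}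

lemma chainIntegral_congr (f : Fn N) :
    ∀ (l : List (Fin N)) (B : List ℝ) {z z' : Pt N}, (∀ j ∉ l, z j = z' j) →
      chainIntegral μ f l B z = chainIntegral μ f l B z'
  | [], _, _, _, h => congrArg f (funext fun j => h j List.not_mem_nil)
  | i :: rest, b :: bs, z, z', h => by
    refine intervalIntegral.integral_congr fun y _ => congrArg (exp (-(I * μ * y)) * ·) ?_
    refine chainIntegral_congr f rest bs fun j hj => ?_
    rcases eq_or_ne j i with rfl | hji
    · simp
    · simp only [update_of_ne hji]
      exact h j (by simp [hji, hj])
  | _ :: _, [], _, _, _ => rfl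

lemma continuous_chainIntegral {f : Fn N} (hf : Continuous f) :
    ∀ (l : List (Fin N)) (B : List ℝ), Continuous (chainIntegral μ f l B)
  | [], _ => hf
  | i :: rest, b :: bs => by
    refine intervalIntegral.continuous_parametric_intervalIntegral_of_continuous' ?_ _ _
    exact (by fun_prop : Continuous fun p : Pt N × ℝ => exp (-(I * μ * p.2))).mul
      ((continuous_chainIntegral hf rest bs).comp (continuous_fst.update i continuous_snd))
  | _ :: _, [] => continuous_const

lemma chainIntegral_add {f g : Fn N} (hf : Continuous f) (hg : Continuous g) :
    ∀ (l : List (Fin N)) (B : List ℝ) (z : Pt N),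
      chainIntegral μ (f + g) l B z = chainIntegral μ f l B z + chainIntegral μ g l B z
  | [], _, _ => rfl
  | i :: rest, b :: bs, z => by
    have hint : ∀ {h : Fn N}, Continuous h → IntervalIntegrable
        (fun y : ℝ => exp (-(I * μ * y)) * chainIntegral μ h rest bs (update z i y))
        volume (bs.headD 0) b := fun hh =>
      ((by fun_prop : Continuous fun y : ℝ => exp (-(I * μ * y))).mul
        ((continuous_chainIntegral hh rest bs).comp
          (continuous_const.update i continuous_id))).intervalIntegrable _ _
    simp only [chainIntegral, chainIntegral_add hf hg rest bs, mul_add]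
    exact intervalIntegral.integral_add (hint hf) (hint hg)
  | _ :: _, [], _ => (add_zero 0).symm

lemma chainIntegral_smul (c : ℂ) (f : Fn N) :
    ∀ (l : List (Fin N)) (B : List ℝ) (z : Pt N),
      chainIntegral μ (c • f) l B z = c * chainIntegral μ f l B z
  | [], _, _ => rfl
  | i :: rest, b :: bs, z => by
    simp only [chainIntegral, chainIntegral_smul c f rest bs, mul_left_comm _ c,
      intervalIntegral.integral_const_mul]
  | _ :: _, [], _ => (mul_zero c).symm

lemma chainIntegral_comp_perm (w : Equiv.Perm (Fin N)) (f : Fn N) :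
    ∀ (l : List (Fin N)) (B : List ℝ) (z : Pt N),
      chainIntegral μ (fun z' => f (z' ∘ ⇑w)) l B z = chainIntegral μ f (l.map ⇑w⁻¹) B (z ∘ ⇑w)
  | [], _, _ => rfl
  | i :: rest, b :: bs, z => by
    simp only [chainIntegral, List.map_cons, chainIntegral_comp_perm w f rest bs]
    congr! 4 with y
    simpa using update_comp_eq_of_injective z w.injective (w⁻¹ i) y
  | _ :: _, [], _ => rfl

end ChainIntegral

section Ehat

variable (μ : ℂ)

/-- Both `ê⁻_{μ;i}` and `ê⁺_{μ;i}` are this function of their chain of integration bounds. -/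
def ehatOfBounds (f : Fn N) (l : List (Fin N)) (B : List ℝ) (z : Pt N) : ℂ :=
  chainInd B * exp (I * μ * (B.sum : ℝ)) * chainIntegral μ f l B z

variable {μ}

lemma exp_sub_mul_exp_mul (a s y : ℝ) (c : ℂ) :
    exp (I * μ * ((a - y : ℝ) : ℂ)) * (exp (I * μ * (s : ℂ)) * c)
      = exp (I * μ * ((a + s : ℝ) : ℂ)) * (exp (-(I * μ * y)) * c) := by
  rw [← mul_assoc, ← mul_assoc, ← exp_add, ← exp_add]
  congr 2
  push_cast
  ring

lemma eMinusAux_eq (f : Fn N) (x : Pt (N + 1)) :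
    ∀ (l : List (Fin N)) (ub : ℝ) (z : Pt N),
      eMinusAux μ f x l ub z = exp (I * μ * ((l.map fun i => x i.castSucc).sum : ℝ))
        * chainIntegral μ f l (ub :: l.map fun i => x i.castSucc) z
  | [], _, _ => by simp [eMinusAux, chainIntegral]
  | i :: rest, ub, z => by
    simp only [eMinusAux, chainIntegral, eMinusAux_eq f x rest, exp_sub_mul_exp_mul,
      List.map_cons, List.sum_cons, List.headD_cons, intervalIntegral.integral_const_mul]

lemma ePlusAux_cons (f : Fn N) (x : Pt (N + 1)) (i : Fin N) (rest : List (Fin N)) (z : Pt N) :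
    ePlusAux μ f x (i :: rest) z
      = ∫ y in (rest.map (fun i => x i.succ) ++ [x 0]).headD 0..x i.succ,
          exp (I * μ * ((x i.succ - y : ℝ) : ℂ)) * ePlusAux μ f x rest (update z i y) := by
  cases rest <;> rfl

lemma ePlusAux_eq (f : Fn N) (x : Pt (N + 1)) :
    ∀ (l : List (Fin N)) (z : Pt N),
      ePlusAux μ f x l z = exp (I * μ * ((l.map fun i => x i.succ).sum : ℝ))
        * chainIntegral μ f l (l.map (fun i => x i.succ) ++ [x 0]) z
  | [], _ => by simp [ePlusAux, chainIntegral]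
  | i :: rest, z => by
    simp only [ePlusAux_cons, chainIntegral, ePlusAux_eq f x rest, exp_sub_mul_exp_mul,
      List.map_cons, List.sum_cons, List.cons_append, intervalIntegral.integral_const_mul]

lemma ehatMinus_eq_ehatOfBounds (f : Fn N) (l : List (Fin N)) (x : Pt (N + 1)) :
    ehatMinus μ l f x
      = ehatOfBounds μ f l ((Fin.last N :: l.map Fin.castSucc).map x) fun j => x j.castSucc := by
  simp only [ehatMinus, ehatOfBounds, eMinusAux_eq, List.map_cons, List.map_map, comp_def,
    List.sum_cons, ofReal_add, mul_add, exp_add]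
  ring

lemma ehatPlus_eq_ehatOfBounds (f : Fn N) (l : List (Fin N)) (x : Pt (N + 1)) :
    ehatPlus μ l f x
      = ehatOfBounds μ f l ((l.map Fin.succ ++ [0]).map x) fun j => x j.succ := by
  simp only [ehatPlus, ehatOfBounds, ePlusAux_eq, List.map_append, List.map_map, comp_def,
    List.map_cons, List.map_nil, List.sum_append, List.sum_cons, List.sum_nil, add_zero,
    ofReal_add, mul_add, exp_add]
  ring

end Ehat

lemma List.map_formPerm_self {α : Type*} [DecidableEq α] (L : List α) (h : L.Nodup) :
    L.map L.formPerm = L.rotate 1 :=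
  List.ext_getElem (by simp) fun k _ _ => by
    simp [List.formPerm_apply_getElem _ h, List.getElem_rotate]

/-- The cycle `N+1 ↦ i₁+1`, `i_m ↦ i_{m+1}+1`, `i_n ↦ 1`, `j ↦ j+1` (`j ∉ i`), which carries the
bounds of `ê⁺_{μ;i}` at `x` to those of `ê⁻_{μ;i}` at `x ∘ σ`. -/
def chainPerm (l : List (Fin N)) : Equiv.Perm (Fin (N + 1)) :=
  (Fin.last N :: l.map Fin.castSucc).formPerm.trans (finRotate (N + 1))

lemma nodup_last_cons_map_castSucc {l : List (Fin N)} (hl : l.Nodup) :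
    (Fin.last N :: l.map Fin.castSucc).Nodup :=
  List.nodup_cons.mpr ⟨by simp [Fin.castSucc_ne_last], hl.map (Fin.castSucc_injective N)⟩

lemma map_chainPerm {l : List (Fin N)} (hl : l.Nodup) :
    (Fin.last N :: l.map Fin.castSucc).map (chainPerm l) = l.map Fin.succ ++ [0] := by
  rw [chainPerm, Equiv.coe_trans, ← List.map_map,
    List.map_formPerm_self _ (nodup_last_cons_map_castSucc hl)]
  simp [Fin.coeSucc_eq_succ]

lemma chainPerm_castSucc_of_notMem {l : List (Fin N)} {j : Fin N} (hj : j ∉ l) :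
    chainPerm l j.castSucc = j.succ := by
  have : j.castSucc ∉ Fin.last N :: l.map Fin.castSucc := by
    simp [hj, Fin.castSucc_ne_last]
  simp [chainPerm, List.formPerm_apply_of_notMem this, Fin.coeSucc_eq_succ]

lemma ehatPlus_eq_ehatMinus_comp {μ : ℂ} (f : Fn N) {l : List (Fin N)} (hl : l.Nodup)
    (x : Pt (N + 1)) : ehatPlus μ l f x = ehatMinus μ l f (x ∘ chainPerm l) := by
  rw [ehatPlus_eq_ehatOfBounds, ehatMinus_eq_ehatOfBounds, ← List.map_map, map_chainPerm hl]
  refine congrArg (_ * ·) (chainIntegral_congr f l _ fun j hj => ?_)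
  simp [chainPerm_castSucc_of_notMem hj]

section Symmetrizer

variable {M : ℕ}

def symNₗ (M : ℕ) : Fn M →ₗ[ℂ] Fn M where
  toFun := symN M
  map_add' g h := funext fun x => by simp [symN, Finset.sum_add_distrib, mul_add]
  map_smul' c g := funext fun x => by simp [symN, Finset.mul_sum, mul_left_comm]

lemma symNₗ_apply (g : Fn M) : symNₗ M g = symN M g := rfl

lemma symN_apply_eq_sum_comp (g : Fn M) (x : Pt M) :
    symN M g x = (M.factorial : ℂ)⁻¹ * ∑ w : Equiv.Perm (Fin M), g (x ∘ ⇑w) :=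
  rfl

lemma symN_comp_perm (g : Fn M) (σ : Equiv.Perm (Fin M)) :
    symN M (fun y => g (y ∘ ⇑σ)) = symN M g := by
  funext x
  simp only [symN_apply_eq_sum_comp]
  exact congrArg _ (Fintype.sum_equiv (Equiv.mulRight σ) _ _ fun _ => rfl)

end Symmetrizer

section CreationOperators

variable {γ : ℝ} {μ : ℂ}

lemma bPlus_eq_sum (f : Fn N) :
    bPlus γ μ f = ∑ n ∈ Finset.range (N + 1),
      (γ : ℂ) ^ n • ∑ e : Fin n ↪ Fin N, ehatPlus μ (List.ofFn ⇑e) f := by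
  funext x
  simp [bPlus, Finset.sum_apply]

lemma bMinus_eq_sum (f : Fn N) :
    bMinus γ μ f = ∑ n ∈ Finset.range (N + 1),
      (γ : ℂ) ^ n • ∑ e : Fin n ↪ Fin N, ehatMinus μ (List.ofFn ⇑e) f := by
  funext x
  simp [bMinus, Finset.sum_apply]

lemma symN_ehatPlus (f : Fn N) {l : List (Fin N)} (hl : l.Nodup) :
    symN (N + 1) (ehatPlus μ l f) = symN (N + 1) (ehatMinus μ l f) := by
  rw [funext (ehatPlus_eq_ehatMinus_comp f hl), symN_comp_perm]

lemma symN_bPlus (f : Fn N) : symN (N + 1) (bPlus γ μ f) = symN (N + 1) (bMinus γ μ f) := by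
  simp only [bPlus_eq_sum, bMinus_eq_sum, ← symNₗ_apply, map_sum, map_smul]
  refine Finset.sum_congr rfl fun n _ => congrArg _ (Finset.sum_congr rfl fun e _ => ?_)
  exact symN_ehatPlus f (List.nodup_ofFn.mpr e.injective)

lemma bMinus_add {f g : Fn N} (hf : Continuous f) (hg : Continuous g) :
    bMinus γ μ (f + g) = bMinus γ μ f + bMinus γ μ g := by
  funext x
  simp only [bMinus, ehatMinus_eq_ehatOfBounds, ehatOfBounds, chainIntegral_add hf hg,
    Pi.add_apply, mul_add, Finset.sum_add_distrib]

lemma bMinus_smul (c : ℂ) (f : Fn N) : bMinus γ μ (c • f) = c • bMinus γ μ f := by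
  funext x
  simp only [bMinus, ehatMinus_eq_ehatOfBounds, ehatOfBounds, chainIntegral_smul,
    Pi.smul_apply, smul_eq_mul, Finset.mul_sum]
  exact Finset.sum_congr rfl fun _ _ => Finset.sum_congr rfl fun _ _ => by ring

lemma bMinus_sum {ι : Type*} (s : Finset ι) (F : ι → Fn N) (hF : ∀ i ∈ s, Continuous (F i)) :
    bMinus γ μ (∑ i ∈ s, F i) = ∑ i ∈ s, bMinus γ μ (F i) := by
  induction s using Finset.cons_induction with
  | empty => simpa using bMinus_smul (γ := γ) (μ := μ) 0 0
  | cons i s hi ih =>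
    have hs : ∀ j ∈ s, Continuous (F j) := fun j hj => hF j (Finset.mem_cons_of_mem hj)
    have hsum : Continuous (∑ j ∈ s, F j) := by
      simpa only [← Finset.sum_apply] using continuous_finsetSum s hs
    rw [Finset.sum_cons, Finset.sum_cons, bMinus_add (hF i (Finset.mem_cons_self i s)) hsum,
      ih hs]

end CreationOperators

section Relabelling

variable {γ : ℝ} {μ : ℂ}

def castSuccPerm (w : Equiv.Perm (Fin N)) : Equiv.Perm (Fin (N + 1)) :=
  (finSuccEquivLast.trans (Equiv.optionCongr w)).trans finSuccEquivLast.symm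

@[simp] lemma castSuccPerm_castSucc (w : Equiv.Perm (Fin N)) (i : Fin N) :
    castSuccPerm w i.castSucc = (w i).castSucc := by
  simp [castSuccPerm]

@[simp] lemma castSuccPerm_last (w : Equiv.Perm (Fin N)) :
    castSuccPerm w (Fin.last N) = Fin.last N := by
  simp [castSuccPerm]

lemma ehatMinus_comp_perm (w : Equiv.Perm (Fin N)) (f : Fn N) (l : List (Fin N))
    (x : Pt (N + 1)) : ehatMinus μ l (fun z => f (z ∘ ⇑w)) x
      = ehatMinus μ (l.map ⇑w⁻¹) f (x ∘ ⇑(castSuccPerm w)) := by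
  rw [ehatMinus_eq_ehatOfBounds, ehatMinus_eq_ehatOfBounds, ehatOfBounds, ehatOfBounds,
    chainIntegral_comp_perm]
  simp [List.map_map, comp_def]

lemma bMinus_comp_perm (w : Equiv.Perm (Fin N)) (f : Fn N) :
    bMinus γ μ (fun z => f (z ∘ ⇑w)) = fun x => bMinus γ μ f (x ∘ ⇑(castSuccPerm w)) := by
  funext x
  refine Finset.sum_congr rfl fun n _ => congrArg _ ?_
  refine Fintype.sum_equiv (Equiv.embeddingCongr (Equiv.refl (Fin n)) w⁻¹) _ _ fun e => ?_
  rw [ehatMinus_comp_perm, List.map_ofFn]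
  rfl

lemma symN_bMinus_symN {f : Fn N} (hf : Continuous f) :
    symN (N + 1) (bMinus γ μ (symN N f)) = symN (N + 1) (bMinus γ μ f) := by
  have hsymN : symN N f = (N.factorial : ℂ)⁻¹ • ∑ w : Equiv.Perm (Fin N), fun z => f (z ∘ ⇑w) :=
    funext fun z => by simp [symN_apply_eq_sum_comp, Finset.sum_apply]
  rw [hsymN, bMinus_smul, bMinus_sum _ (fun (w : Equiv.Perm (Fin N)) z => f (z ∘ ⇑w))
    fun w _ => hf.comp (by fun_prop)]
  simp only [bMinus_comp_perm, ← symNₗ_apply, map_smul, map_sum]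
  simp only [symNₗ_apply, symN_comp_perm, Finset.sum_const, Finset.card_univ, Fintype.card_perm,
    Fintype.card_fin, ← Nat.cast_smul_eq_nsmul ℂ, smul_smul]
  rw [inv_mul_cancel₀ (Nat.cast_ne_zero.mpr N.factorial_ne_zero), one_smul]

end Relabelling

theorem statement_19_general (N : ℕ) (γ : ℝ) (μ : ℂ)
    (f : Fn N) (hf : CBsmooth f) :
    (∀ (ε : Bool) (x : Pt (N + 1)),
      symN (N + 1) (bEps ε γ μ f) x = symN (N + 1) (bMinus γ μ (symN N f)) x) ∧
    (∀ x : Pt (N + 1), symN (N + 1) (bPlus γ μ f) x = symN (N + 1) (bMinus γ μ f) x) := by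
  refine ⟨fun ε x => ?_, fun x => by rw [symN_bPlus]⟩
  rw [symN_bMinus_symN hf.1]
  cases ε
  · rfl
  · exact congrFun (symN_bPlus f) x

/-- symmetrization intertwines the non-symmetric creation operators with
the QISM creation operator: for `f ∈ CB^∞(ℝ^N)` and both signs `ε`,
`𝒮_{N+1}(b^ε_μ f) = 𝒮_{N+1}(b⁻_μ (𝒮_N f)) = B_μ (𝒮_N f)`; in particular
`𝒮_{N+1}(b⁺_μ f) = 𝒮_{N+1}(b⁻_μ f)`. -/
theorem statement_19 (N : ℕ) (hN : 1 ≤ N) (γ : ℝ) (μ : ℂ)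
    (f : Fn N) (hf : CBsmooth f) :
    (∀ (ε : Bool) (x : Pt (N + 1)),
      symN (N + 1) (bEps ε γ μ f) x = symN (N + 1) (bMinus γ μ (symN N f)) x) ∧
    (∀ x : Pt (N + 1), symN (N + 1) (bPlus γ μ f) x = symN (N + 1) (bMinus γ μ f) x) :=
  statement_19_general N γ μ f hf

end
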